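/- arXiv:math/0611923 — 6 statements merged into one kernel-verified Lean document; each statement's English description precedes it below -/
import Mathlib

section
/- For every n ≥ 2, the number of permutations π ∈ S_n that avoid the generalized pattern 32-1 and satisfy π_1 = 1 equals the Bell number B_{n-1}; and for every k with 2 ≤ k ≤ n, the number of permutations π ∈ S_n that avoid 32-1 and satisfy π_1 = k equals ∇^{k-2}(B_{n-1}) = Σ_{i=0}^{k-2} (-1)^i · C(k-2, i) · B_{n-1-i}. -/
/-- `π` avoids the generalized pattern 32-1. -/
def Avoids32d1 {n : ℕ} (π : Equiv.Perm (Fin n)) : Prop :=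
  ¬ ∃ (i j : Fin n) (h : i.1 + 1 < n), i.1 + 1 < j.1 ∧ π j < π ⟨i.1 + 1, h⟩ ∧ π ⟨i.1 + 1, h⟩ < π i

/-- The `m`-th Bell number: the number of partitions of a set with `m` elements,
equivalently the number of equivalence relations (setoids) on `Fin m`. -/
noncomputable def bell (m : ℕ) : ℕ := Nat.card (Setoid (Fin m))

/-!
Write `a(n, k)` for the number of 32-1 avoiders `π ∈ S_{n+1}` with first entry `k` (values
`0, …, n`), and let `σ ∈ S_n` be `π` with its first entry deleted and the rest standardized.
An occurrence of 32-1 in `π` either lies in the tail, where it is an occurrence in `σ`, or starts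
at the first entry; the latter happens iff `σ_0 < k` and some later entry of `σ` is below `σ_0`,
i.e. iff `0 < σ_0 < k`. Hence `a(n + 1, k)` counts the avoiders `σ ∈ S_{n+1}` with `σ_0 = 0` or
`σ_0 ≥ k`, which gives `a(n + 1, 0) = a(n + 1, 1) = Σ_k a(n, k)` and
`a(n + 1, k) = a(n + 1, k + 1) + a(n, k)` for `k ≥ 1`.

By induction, `a(n, k) = ∇^{k-1} B_n` for `k ≥ 1`, using `∇^{j+1} B_{n+1} = ∇^j B_{n+1} - ∇^j B_n`;
the total `Σ_k a(n, k)` telescopes to `B_{n+1}` because `∇^n B_{n+1} = B_n`, which is the binomial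
inversion of the Bell recurrence `B_{n+1} = Σ_i C(n, i) B_i`.
-/

open Equiv Finset

theorem sum_alternating_choose_mul_sum_choose (a : ℕ → ℤ) (m : ℕ) :
    ∑ k ∈ range (m + 1), (-1) ^ (m - k) * (m.choose k : ℤ) *
      ∑ i ∈ range (k + 1), (k.choose i : ℤ) * a i = a m := by
  -- The Newton series with coefficients `a`; its `m`-th forward difference at `0` is `a m`.
  set g : ℕ → ℤ := ∑ i ∈ range (m + 1), a i • fun x => (x.choose i : ℤ)
  have hg (k : ℕ) (hk : k ∈ range (m + 1)) :
      ∑ i ∈ range (k + 1), (k.choose i : ℤ) * a i = g k := by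
    rw [mem_range] at hk
    simp only [g, Finset.sum_apply, Pi.smul_apply, smul_eq_mul]
    refine sum_subset_zero_on_sdiff (range_subset_range.2 (by omega : k + 1 ≤ m + 1))
      (fun i hi => ?_) (fun i _ => mul_comm _ _)
    simp [Nat.choose_eq_zero_of_lt (by simpa using (mem_sdiff.1 hi).2 : k < i)]
  calc _ = (fwdDiff 1)^[m] g 0 := by
        rw [fwdDiff_iter_eq_sum_shift]
        exact sum_congr rfl fun k hk => by simp [hg k hk]
    _ = a m := by
        simp only [g, fwdDiff_iter_finsetSum, fwdDiff_iter_const_smul, Finset.sum_apply,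
          Pi.smul_apply, fwdDiff_iter_choose_zero, smul_eq_mul, mul_ite, mul_one, mul_zero]
        simp

def nabla (f : ℕ → ℤ) (j N : ℕ) : ℤ :=
  ∑ i ∈ range (j + 1), (-1) ^ i * (j.choose i : ℤ) * f (N - i)

theorem nabla_zero (f : ℕ → ℤ) (N : ℕ) : nabla f 0 N = f N := by
  simp [nabla]

theorem nabla_succ (f : ℕ → ℤ) (j N : ℕ) :
    nabla f (j + 1) (N + 1) = nabla f j (N + 1) - nabla f j N := by
  have nabla_eq (j M : ℕ) :
      nabla f j M = ∑ i ∈ range (j + 1), (j.choose i : ℤ) * ((-1) ^ i * f (M - i)) :=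
    sum_congr rfl fun _ _ => by ring
  rw [nabla_eq, nabla_eq, nabla_eq, sum_choose_succ_mul (fun i _ => (-1) ^ i * f (N + 1 - i)),
    sub_eq_add_neg, ← sum_neg_distrib]
  exact congrArg _ (sum_congr rfl fun i _ => by rw [Nat.add_sub_add_right]; ring)

theorem sum_range_nabla (f : ℕ → ℤ) (M N : ℕ) :
    ∑ j ∈ range M, nabla f j N = f (N + 1) - nabla f M (N + 1) := by
  rw [← nabla_zero f (N + 1), ← sum_range_sub' (fun j => nabla f j (N + 1))]
  exact sum_congr rfl fun j _ => by rw [nabla_succ]; ring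

theorem nabla_self_succ {f : ℕ → ℤ}
    (hf : ∀ k, f (k + 1) = ∑ i ∈ range (k + 1), (k.choose i : ℤ) * f i) (m : ℕ) :
    nabla f m (m + 1) = f m := by
  rw [nabla, ← sum_range_reflect, ← sum_alternating_choose_mul_sum_choose f m]
  refine sum_congr rfl fun k hk => ?_
  rw [mem_range] at hk
  rw [Nat.add_sub_cancel, Nat.choose_symm (by omega), show m + 1 - (m - k) = k + 1 by omega, hf]

namespace Setoid

variable {α β : Type*}

instance [Finite α] : Finite (Setoid α) :=
  Finite.of_injective (fun r : Setoid α => r.r) fun _ _ h =>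
    Setoid.ext fun a b => iff_of_eq (congrFun (congrFun h a) b)

def _root_.Equiv.setoidCongr (e : α ≃ β) : Setoid α ≃ Setoid β where
  toFun r := r.comap e.symm
  invFun r := r.comap e
  left_inv r := Setoid.ext fun a b => by simp [comap_rel]
  right_inv r := Setoid.ext fun a b => by simp [comap_rel]

theorem card_eq_bell [Fintype α] : Nat.card (Setoid α) = bell (Fintype.card α) :=
  Nat.card_congr (Fintype.equivFin α).setoidCongr

variable [DecidableEq α]

/-- Merges `none` with the elements outside `s` into one class, and puts `r` on `s`. -/
def glueNone (s : Finset α) (r : Setoid s) : Setoid (Option α) :=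
  ker fun x => x.bind fun a => if h : a ∈ s then some (Quotient.mk r ⟨a, h⟩) else none

theorem glueNone_iff {s : Finset α} {r : Setoid s} {x y : Option α} :
    glueNone s r x y ↔ (x.bind fun a => if h : a ∈ s then some (Quotient.mk r ⟨a, h⟩) else none) =
      y.bind fun a => if h : a ∈ s then some (Quotient.mk r ⟨a, h⟩) else none :=
  Iff.rfl

theorem comap_glueNone (s : Finset α) (r : Setoid s) :
    (glueNone s r).comap (some ∘ Subtype.val) = r :=
  Setoid.ext fun a b => by simp [glueNone_iff, comap_rel, Quotient.eq]

variable [Fintype α]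

open Classical in
noncomputable def awayFromNone (r : Setoid (Option α)) : Finset α := {a | ¬ r (some a) none}

theorem awayFromNone_glueNone (s : Finset α) (r : Setoid s) : awayFromNone (glueNone s r) = s := by
  ext a
  by_cases h : a ∈ s <;> simp [awayFromNone, glueNone_iff, h]

theorem glueNone_awayFromNone (r : Setoid (Option α)) :
    glueNone (awayFromNone r) (r.comap (some ∘ Subtype.val)) = r := by
  refine Setoid.ext fun x y => ?_
  have mem (a : α) : a ∈ awayFromNone r ↔ ¬ r (some a) none := by simp [awayFromNone]
  rcases x with _ | a <;> rcases y with _ | b <;>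
    simp only [glueNone_iff, Option.bind_none, Option.bind_some]
  · exact iff_of_true trivial (r.refl _)
  · split_ifs with hb <;> simp only [mem, not_not] at hb <;> simp [r.comm' (x := none), hb]
  · split_ifs with ha <;> simp only [mem, not_not] at ha <;> simp [ha]
  · split_ifs with ha hb hb <;> simp only [mem, not_not] at ha hb
    · simp [Quotient.eq, comap_rel]
    · exact iff_of_false (by simp) fun hab => ha (r.trans hab hb)
    · exact iff_of_false (by simp) fun hab => hb (r.trans (r.symm hab) ha)
    · exact iff_of_true rfl (r.trans ha (r.symm hb))

def fiberAwayFromNoneEquiv (s : Finset α) :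
    {r : Setoid (Option α) // awayFromNone r = s} ≃ Setoid s where
  toFun r := r.1.comap (some ∘ Subtype.val)
  invFun r := ⟨glueNone s r, awayFromNone_glueNone s r⟩
  left_inv := by
    rintro ⟨r, rfl⟩
    exact Subtype.ext (glueNone_awayFromNone r)
  right_inv := comap_glueNone s

theorem card_option_eq_sum : Nat.card (Setoid (Option α)) = ∑ s : Finset α, bell #s := by
  rw [← Nat.card_congr (Equiv.sigmaFiberEquiv awayFromNone), Nat.card_sigma]
  exact sum_congr rfl fun s _ => by
    rw [Nat.card_congr (fiberAwayFromNoneEquiv s), card_eq_bell, Fintype.card_coe]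

end Setoid

theorem bell_zero : bell 0 = 1 :=
  Nat.card_eq_one_iff_unique.2 ⟨⟨fun _ _ => Setoid.ext fun a => a.elim0⟩, ⟨⊥⟩⟩

theorem bell_succ (m : ℕ) : bell (m + 1) = ∑ i ∈ range (m + 1), m.choose i * bell i := by
  rw [bell, Nat.card_congr (finSuccEquiv m).setoidCongr, Setoid.card_option_eq_sum,
    ← powerset_univ, sum_powerset_apply_card, card_univ, Fintype.card_fin]
  simp

theorem bell_add_sum_range_nabla (n : ℕ) :
    (bell n : ℤ) + ∑ j ∈ range n, nabla (fun m => (bell m : ℤ)) j n = bell (n + 1) := by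
  rw [sum_range_nabla, nabla_self_succ fun k => by exact_mod_cast bell_succ k]
  ring

theorem avoids32d1_iff {n : ℕ} {π : Perm (Fin (n + 1))} :
    Avoids32d1 π ↔
      ¬ ∃ (i : Fin n) (j : Fin (n + 1)), i.succ < j ∧ π j < π i.succ ∧ π i.succ < π i.castSucc := by
  refine not_congr ⟨fun ⟨i, j, hi, hij, hlt⟩ => ⟨⟨i, by omega⟩, j, hij, hlt⟩, ?_⟩
  rintro ⟨i, j, hij, hlt⟩
  exact ⟨i.castSucc, j, by simp, hij, hlt⟩

theorem exists_ne_apply_lt_apply_iff {α : Type*} [PartialOrder α] [OrderBot α] (σ : Perm α)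
    (a : α) : (∃ j ≠ a, σ j < σ a) ↔ σ a ≠ ⊥ := by
  refine ⟨fun ⟨j, _, hj⟩ => ne_bot_of_gt hj, fun ha => ⟨σ.symm ⊥, ?_, ?_⟩⟩
  · rintro rfl
    simp at ha
  · simpa [bot_lt_iff_ne_bot] using ha

theorem avoids32d1_iff_of_apply_succ {n : ℕ} {π : Perm (Fin (n + 2))} {σ : Perm (Fin (n + 1))}
    (h : ∀ x, π x.succ = (π 0).succAbove (σ x)) :
    Avoids32d1 π ↔ Avoids32d1 σ ∧ (σ 0 = 0 ∨ π 0 ≤ (σ 0).castSucc) := by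
  have shift (i : Fin (n + 1)) :
      (∃ j, i.succ < j ∧ π j < π i.succ ∧ π i.succ < π i.castSucc) ↔
        ∃ j, i < j ∧ σ j < σ i ∧ π i.succ < π i.castSucc := by
    simp [Fin.exists_fin_succ (P := fun j => i.succ < j ∧ _), h, Fin.succAbove_lt_succAbove_iff]
  have head : (∃ j : Fin (n + 1), 0 < j ∧ σ j < σ 0) ↔ σ 0 ≠ 0 := by
    simpa [Fin.pos_iff_ne_zero, bot_eq_zero] using exists_ne_apply_lt_apply_iff σ 0
  rw [avoids32d1_iff, avoids32d1_iff, Fin.exists_fin_succ]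
  simp only [shift]
  simp only [← Fin.succ_castSucc, Fin.castSucc_zero, h, Fin.succAbove_lt_succAbove_iff,
    Fin.succAbove_lt_iff_castSucc_lt, ← and_assoc, exists_and_right, head]
  rw [not_or, and_comm, not_and_or, not_ne_iff, not_lt]

def permDeleteEquiv {n : ℕ} (p q : Fin (n + 1)) :
    {π : Perm (Fin (n + 1)) // π p = q} ≃ Perm (Fin n) :=
  (((finSuccEquiv' p).equivCongr (Equiv.refl _)).subtypeEquiv fun π => by simp).trans <|
    (Equiv.optionSubtype q).trans ((Equiv.refl _).equivCongr (finSuccAboveEquiv q).symm)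

theorem succAbove_permDeleteEquiv_apply {n : ℕ} (p q : Fin (n + 1))
    (π : {π : Perm (Fin (n + 1)) // π p = q}) (x : Fin n) :
    q.succAbove (permDeleteEquiv p q π x) = π.1 (p.succAbove x) := by
  have (z : {y // y ≠ q}) : q.succAbove ((finSuccAboveEquiv q).symm z) = z :=
    congrArg Subtype.val ((finSuccAboveEquiv q).apply_symm_apply z)
  simp [permDeleteEquiv, this]
  rfl

/-- The `a(n, k)` of the proof sketch above. -/
noncomputable def firstEntryCount (n k : ℕ) : ℕ :=
  Nat.card {π : Perm (Fin (n + 1)) // Avoids32d1 π ∧ (π 0 : ℕ) = k}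

theorem firstEntryCount_zero_zero : firstEntryCount 0 0 = 1 :=
  Nat.card_eq_one_iff_unique.2
    ⟨⟨fun _ _ => Subtype.ext (Subsingleton.elim (α := Perm (Fin 1)) _ _)⟩,
      ⟨⟨1, fun ⟨_, _, h, _⟩ => by omega, rfl⟩⟩⟩

theorem firstEntryCount_succ {n k : ℕ} (hk : k < n + 2) :
    firstEntryCount (n + 1) k =
      Nat.card {σ : Perm (Fin (n + 1)) // Avoids32d1 σ ∧ ((σ 0 : ℕ) = 0 ∨ k ≤ σ 0)} := by
  set q : Fin (n + 2) := ⟨k, hk⟩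
  calc firstEntryCount (n + 1) k
        = Nat.card {π : {π : Perm (Fin (n + 2)) // π 0 = q} // Avoids32d1 π.1} := by
          refine Nat.card_congr ((Equiv.subtypeSubtypeEquivSubtypeInter _ _).trans
            (Equiv.subtypeEquivRight fun π => ?_)).symm
          simp [q, Fin.ext_iff, and_comm]
    _ = _ := Nat.card_congr ((permDeleteEquiv 0 q).subtypeEquiv fun π => ?_)
  have hσ (x : Fin (n + 1)) : π.1 x.succ = (π.1 0).succAbove (permDeleteEquiv 0 q π x) := by
    rw [π.2, succAbove_permDeleteEquiv_apply, Fin.succAbove_zero]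
  rw [avoids32d1_iff_of_apply_succ hσ, π.2]
  simp only [q, Fin.ext_iff, Fin.le_iff_val_le_val, Fin.val_castSucc, Fin.val_zero]

theorem card_avoids32d1_eq_sum (n : ℕ) :
    Nat.card {σ : Perm (Fin (n + 1)) // Avoids32d1 σ} =
      ∑ k ∈ range (n + 1), firstEntryCount n k := by
  rw [← Nat.card_congr (Equiv.sigmaFiberEquiv fun σ : {σ // Avoids32d1 σ} => σ.1 0), Nat.card_sigma,
    ← Fin.sum_univ_eq_sum_range]
  refine sum_congr rfl fun k _ => Nat.card_congr ?_
  exact (Equiv.subtypeSubtypeEquivSubtypeInter Avoids32d1 (fun σ => σ 0 = k)).trans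
    (Equiv.subtypeEquivRight fun σ => by simp [Fin.ext_iff])

theorem firstEntryCount_succ_of_le_one {n k : ℕ} (hk : k ≤ 1) :
    firstEntryCount (n + 1) k = ∑ j ∈ range (n + 1), firstEntryCount n j := by
  rw [firstEntryCount_succ (by omega), ← card_avoids32d1_eq_sum]
  exact Nat.card_congr (Equiv.subtypeEquivRight fun σ => by simp only [and_iff_left_iff_imp]; omega)

theorem firstEntryCount_succ_eq_add {n k : ℕ} (hk : 1 ≤ k) (hkn : k + 1 < n + 2) :
    firstEntryCount (n + 1) k = firstEntryCount (n + 1) (k + 1) + firstEntryCount n k := by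
  classical
  rw [firstEntryCount_succ (by omega), firstEntryCount_succ hkn, firstEntryCount, ← Nat.card_sum]
  refine Nat.card_congr ((Equiv.subtypeEquivRight fun σ => ?_).trans (subtypeOrEquiv _ _ ?_))
  · rw [← and_or_left]
    exact and_congr_right fun _ => by omega
  · simp only [Pi.disjoint_iff, Prop.disjoint_iff]
    omega

-- `k - 1` truncates, so the case `k = 0` reads `a(n, 0) = B_n`.
theorem firstEntryCount_eq_nabla {n k : ℕ} (hk : k ≤ n) :
    (firstEntryCount n k : ℤ) = nabla (fun m => (bell m : ℤ)) (k - 1) n := by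
  induction n generalizing k with
  | zero =>
    obtain rfl : k = 0 := by omega
    simp [firstEntryCount_zero_zero, nabla_zero, bell_zero]
  | succ n ih =>
    have total : ∑ j ∈ range (n + 1), (firstEntryCount n j : ℤ) = bell (n + 1) := by
      rw [sum_range_succ', ih (Nat.zero_le n), Nat.zero_sub, nabla_zero, add_comm,
        ← bell_add_sum_range_nabla]
      exact congrArg _ (sum_congr rfl fun j hj => by simpa using ih (by simpa using hj : j + 1 ≤ n))
    have low {k : ℕ} (hk : k ≤ 1) : (firstEntryCount (n + 1) k : ℤ) = bell (n + 1) := by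
      rw [firstEntryCount_succ_of_le_one hk, ← total]
      push_cast
      rfl
    induction k with
    | zero => rw [low zero_le_one, Nat.zero_sub, nabla_zero]
    | succ k ihk =>
      obtain rfl | ⟨j, rfl⟩ : k = 0 ∨ ∃ j, k = j + 1 := by cases k <;> simp
      · rw [low le_rfl, Nat.sub_self, nabla_zero]
      · have step : (firstEntryCount (n + 1) (j + 2) : ℤ) =
            firstEntryCount (n + 1) (j + 1) - firstEntryCount n (j + 1) := by
          rw [firstEntryCount_succ_eq_add (Nat.le_add_left 1 j) (by omega)]
          push_cast
          ring
        rw [step, ihk (by omega), ih (by omega)]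
        simp [nabla_succ]

theorem card_avoids32d1_apply_zero_eq (n : ℕ) (q : Fin (n + 1)) :
    Nat.card {π : Perm (Fin (n + 1)) // Avoids32d1 π ∧ π ⟨0, n.succ_pos⟩ = q} =
      firstEntryCount n q :=
  Nat.card_congr (Equiv.subtypeEquivRight fun π => by simp [Fin.ext_iff])

theorem bell_distribution (n : ℕ) (hn : 2 ≤ n) :
    Nat.card {π : Equiv.Perm (Fin n) // Avoids32d1 π ∧ π ⟨0, by omega⟩ = ⟨0, by omega⟩} = bell (n - 1) ∧
    ∀ k : ℕ, (hk1 : 2 ≤ k) → (hk2 : k ≤ n) →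
      (Nat.card {π : Equiv.Perm (Fin n) // Avoids32d1 π ∧ π ⟨0, by omega⟩ = ⟨k - 1, by omega⟩} : ℤ) =
        ∑ i ∈ Finset.range (k - 1), (-1 : ℤ) ^ i * (((k - 2)).choose i) * (bell (n - 1 - i) : ℤ) := by
  obtain ⟨n, rfl⟩ : ∃ m, n = m + 1 := ⟨n - 1, by omega⟩
  refine ⟨?_, fun k hk1 hk2 => ?_⟩
  · have h := firstEntryCount_eq_nabla (Nat.zero_le n)
    rw [Nat.zero_sub, nabla_zero] at h
    rw [card_avoids32d1_apply_zero_eq n ⟨0, n.succ_pos⟩]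
    exact_mod_cast h
  · rw [card_avoids32d1_apply_zero_eq n ⟨k - 1, by omega⟩, firstEntryCount_eq_nabla (by omega),
      nabla, show k - 1 - 1 + 1 = k - 1 by omega]
    simp [show k - 1 - 1 = k - 2 by omega]
end

section
/- For every n ≥ 1 and every k with 1 ≤ k ≤ n, the number N of permutations π ∈ S_n that avoid the generalized pattern 2-13 and satisfy π_n = k is the ballot number (k/n)·C(2n-k-1, n-1); equivalently, n · N = k · C(2n-k-1, n-1). -/
/-!
Removing the last entry `k` of a 2-13-avoiding permutation of `n + 1` letters and standardizing
leaves a 2-13-avoiding permutation `σ` of `n` letters. Conversely, appending `k` to `σ` creates an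
occurrence of 2-13 exactly when some value lies strictly between the last value of `σ` and `k`
(a new occurrence must use the final ascent), i.e. when `k` exceeds the last value of `σ` by more
than one. So the counts satisfy the recurrence `N(n + 1, k) = ∑_{m ≥ k - 1} N(n, m)`, which the
ballot numbers `C(2n - k - 1, n - 1) - C(2n - k - 1, n) = (k / n) C(2n - k - 1, n - 1)` also satisfy,
by Pascal's rule.
-/

/-- `π` avoids the generalized pattern 2-13. -/
def Avoids2d13 {n : ℕ} (π : Equiv.Perm (Fin n)) : Prop :=
  ¬ ∃ (i j : Fin n) (h : j.1 + 1 < n), i < j ∧ π j < π i ∧ π i < π ⟨j.1 + 1, h⟩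

open Equiv Finset Fin

section InsertLast

variable {n : ℕ}

/-- The permutation of `Fin (n + 1)` ending in `k` whose first `n` values are order-isomorphic
to `σ`. -/
def insertLast (k : Fin (n + 1)) (σ : Perm (Fin n)) : Perm (Fin (n + 1)) :=
  finSuccEquivLast.trans (σ.optionCongr.trans (finSuccEquiv' k).symm)

@[simp]
lemma insertLast_castSucc (k : Fin (n + 1)) (σ : Perm (Fin n)) (i : Fin n) :
    insertLast k σ i.castSucc = k.succAbove (σ i) := by
  simp [insertLast]

@[simp]
lemma insertLast_last (k : Fin (n + 1)) (σ : Perm (Fin n)) : insertLast k σ (last n) = k := by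
  simp [insertLast]

def removeLast (k : Fin (n + 1)) (π : Perm (Fin (n + 1))) : Perm (Fin n) :=
  removeNone (finSuccEquivLast.symm.trans (π.trans (finSuccEquiv' k)))

lemma removeLast_insertLast (k : Fin (n + 1)) (σ : Perm (Fin n)) :
    removeLast k (insertLast k σ) = σ := by
  rw [removeLast]
  convert removeNone_optionCongr σ using 2
  ext x
  simp [insertLast]

lemma insertLast_removeLast {k : Fin (n + 1)} {π : Perm (Fin (n + 1))} (hk : π (last n) = k) :
    insertLast k (removeLast k π) = π := by
  have hnone : (finSuccEquivLast.symm.trans (π.trans (finSuccEquiv' k))) none = none := by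
    simp [hk]
  rw [insertLast, removeLast, map_equiv_removeNone, hnone, swap_self]
  ext
  simp

end InsertLast

lemma avoids2d13_iff {m : ℕ} (π : Perm (Fin (m + 1))) :
    Avoids2d13 π ↔
      ∀ (i : Fin (m + 1)) (j : Fin m), i < j.castSucc → ¬ (π j.castSucc < π i ∧ π i < π j.succ) := by
  constructor
  · rintro h i j hij ⟨h₁, h₂⟩
    exact h ⟨i, j.castSucc, by simp, hij, h₁, h₂⟩
  · rintro h ⟨i, j, hj, hij, h₁, h₂⟩
    exact h i ⟨j, by omega⟩ hij ⟨h₁, h₂⟩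

lemma Fin.forall_not_between_iff {m : ℕ} (a : Fin (m + 1)) (k : Fin (m + 2)) :
    (∀ v : Fin (m + 1), ¬ (a < v ∧ v.castSucc < k)) ↔ k ≤ a.succ := by
  simp only [Fin.lt_def, Fin.le_def, val_castSucc, val_succ, not_and, not_lt]
  refine ⟨fun h => ?_, fun hk v hav => by omega⟩
  by_contra! hk
  have := h ⟨a + 1, by omega⟩
  simp at this
  omega

lemma avoids2d13_insertLast_iff {m : ℕ} (k : Fin (m + 2)) (σ : Perm (Fin (m + 1))) :
    Avoids2d13 (insertLast k σ) ↔ Avoids2d13 σ ∧ k ≤ (σ (last m)).succ := by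
  rw [avoids2d13_iff, avoids2d13_iff, ← Fin.forall_not_between_iff]
  constructor
  · intro h
    refine ⟨fun i j hij hσ => h i.castSucc j.castSucc (castSucc_lt_castSucc_iff.2 hij) ?_,
      σ.forall_congr_right.1 fun i ⟨h₁, h₂⟩ => h i.castSucc (last m) ?_ ?_⟩
    · rw [succ_castSucc j]
      simpa only [insertLast_castSucc, succAbove_lt_succAbove_iff] using hσ
    · exact castSucc_lt_castSucc_iff.2 (lt_last_iff_ne_last.2 (by rintro rfl; exact h₁.false))
    · simpa [succAbove_lt_succAbove_iff, succAbove_lt_iff_castSucc_lt] using ⟨h₁, h₂⟩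
  · rintro ⟨hσ, hk⟩ i j hij
    obtain ⟨i, rfl⟩ := exists_castSucc_eq.2 (ne_last_of_lt hij)
    induction j using lastCases with
    | last =>
      simpa [succAbove_lt_succAbove_iff, succAbove_lt_iff_castSucc_lt] using hk (σ i)
    | cast j =>
      rw [succ_castSucc j]
      simpa only [insertLast_castSucc, succAbove_lt_succAbove_iff] using
        hσ i j (castSucc_lt_castSucc_iff.1 hij)

lemma card_avoids2d13_last_eq {n : ℕ} (k : Fin (n + 2)) :
    Nat.card {π : Perm (Fin (n + 2)) // Avoids2d13 π ∧ π (last (n + 1)) = k} =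
      Nat.card {σ : Perm (Fin (n + 1)) // Avoids2d13 σ ∧ k ≤ (σ (last n)).succ} :=
  Nat.card_congr
    { toFun π := ⟨removeLast k π, (avoids2d13_insertLast_iff k _).1 <| by
        rw [insertLast_removeLast π.2.2]; exact π.2.1⟩
      invFun σ := ⟨insertLast k σ, (avoids2d13_insertLast_iff k σ).2 σ.2, insertLast_last k σ⟩
      left_inv π := Subtype.ext (insertLast_removeLast π.2.2)
      right_inv σ := Subtype.ext (removeLast_insertLast k σ) }

/-- Both indices are shifted by one from the informal statement: this counts permutations of
`n + 1` letters ending in the value `m + 1`. -/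
noncomputable def avoiderCount (n m : ℕ) : ℕ :=
  Nat.card {σ : Perm (Fin (n + 1)) // Avoids2d13 σ ∧ (σ (last n)).val = m}

lemma avoiderCount_zero : avoiderCount 0 0 = 1 := by
  have h (σ : Perm (Fin 1)) : Avoids2d13 σ ∧ (σ (last 0)).val = 0 :=
    ⟨fun ⟨_, j, hj, _⟩ => by omega, by omega⟩
  rw [avoiderCount, Nat.card_congr (Equiv.subtypeUnivEquiv h)]
  simp

lemma avoiderCount_succ {n k : ℕ} (hk : k ≤ n + 1) :
    avoiderCount (n + 1) k = ∑ m ∈ Ico (k - 1) (n + 1), avoiderCount n m := by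
  classical
  have hlast (σ : Perm (Fin (n + 1))) :
      ⟨k, by omega⟩ ≤ (σ (last n)).succ ↔ (σ (last n)).val ∈ Ico (k - 1) (n + 1) := by
    simp only [Fin.le_def, val_succ, mem_Ico]
    omega
  have hcount (m : ℕ) :
      avoiderCount n m = #{σ ∈ {σ | Avoids2d13 σ} | (σ (last n)).val = m} := by
    rw [avoiderCount, Nat.card_eq_fintype_card, Fintype.card_subtype, filter_filter]
  calc avoiderCount (n + 1) k
      = Nat.card {π : Perm (Fin (n + 2)) // Avoids2d13 π ∧ π (last (n + 1)) = ⟨k, by omega⟩} := by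
        simp only [avoiderCount, Fin.ext_iff]
    _ = #{σ ∈ {σ | Avoids2d13 σ} | (σ (last n)).val ∈ Ico (k - 1) (n + 1)} := by
        rw [card_avoids2d13_last_eq, Nat.card_eq_fintype_card, Fintype.card_subtype, filter_filter]
        simp only [hlast]
    _ = ∑ m ∈ Ico (k - 1) (n + 1), avoiderCount n m := by
        rw [← sum_card_fiberwise_eq_card_filter]
        simp only [hcount]

def ballot (n k : ℕ) : ℤ :=
  (2 * n - k).choose n - (2 * n - k).choose (n + 1)

lemma ballot_self (n : ℕ) : ballot n n = 1 := by
  simp [ballot, show 2 * n - n = n by omega]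

lemma ballot_succ_zero (n : ℕ) : ballot (n + 1) 0 = ballot (n + 1) 1 := by
  rw [ballot, ballot, show 2 * (n + 1) - 0 = 2 * n + 1 + 1 by omega,
    show 2 * (n + 1) - 1 = 2 * n + 1 by omega, Nat.choose_succ_succ (2 * n + 1) n,
    Nat.choose_succ_succ (2 * n + 1) (n + 1), Nat.choose_symm_half]
  push_cast
  ring

lemma ballot_succ_succ {n k : ℕ} (hk : k ≤ 2 * n) :
    ballot (n + 1) (k + 1) = ballot n k + ballot (n + 1) (k + 2) := by
  rw [ballot, ballot, ballot, show 2 * (n + 1) - (k + 1) = 2 * n - k + 1 by omega,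
    show 2 * (n + 1) - (k + 2) = 2 * n - k by omega, Nat.choose_succ_succ (2 * n - k) n,
    Nat.choose_succ_succ (2 * n - k) (n + 1)]
  push_cast
  ring

lemma ballot_succ_eq_sum {n k : ℕ} (hk : k ≤ n + 1) :
    ballot (n + 1) k = ∑ m ∈ Ico (k - 1) (n + 1), ballot n m := by
  have hshift : ∀ k ≤ n + 1, ballot (n + 1) (k + 1) = ∑ m ∈ Ico k (n + 1), ballot n m := by
    refine fun k hk => Nat.decreasingInduction (fun k hk ih => ?_) ?_ hk
    · rw [ballot_succ_succ (by omega), ih, ← sum_eq_sum_Ico_succ_bot hk]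
    · simp [ballot, show 2 * (n + 1) - (n + 1 + 1) = n by omega, Nat.choose_eq_zero_of_lt]
  cases k with
  | zero => rw [ballot_succ_zero, hshift 0 (by omega)]
  | succ k => exact hshift k (by omega)

lemma avoiderCount_eq_ballot {n k : ℕ} (hk : k ≤ n) : (avoiderCount n k : ℤ) = ballot n k := by
  induction n generalizing k with
  | zero => rw [Nat.le_zero.1 hk, avoiderCount_zero, ballot_self]; rfl
  | succ n ih =>
    rw [avoiderCount_succ hk, ballot_succ_eq_sum hk, Nat.cast_sum]
    exact sum_congr rfl fun m hm => ih (by simp at hm; omega)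

lemma succ_mul_ballot {n k : ℕ} (hk : k ≤ n) :
    (n + 1) * ballot n k = (k + 1) * (2 * n - k).choose n := by
  have h := Nat.choose_succ_right_eq (2 * n - k) n
  rw [show 2 * n - k - n = n - k by omega] at h
  have h' := congrArg (Nat.cast : ℕ → ℤ) h
  push_cast [Nat.cast_sub hk] at h'
  rw [ballot]
  linear_combination -h'

theorem ballot_distribution (n k : ℕ) (hn : 1 ≤ n) (hk1 : 1 ≤ k) (hkn : k ≤ n) :
    n * Nat.card {π : Equiv.Perm (Fin n) // Avoids2d13 π ∧ π ⟨n - 1, by omega⟩ = ⟨k - 1, by omega⟩} = k * (2 * n - k - 1).choose (n - 1) := by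
  obtain ⟨n, rfl⟩ := Nat.exists_eq_add_of_le' hn
  obtain ⟨k, rfl⟩ := Nat.exists_eq_add_of_le' hk1
  have hcard : Nat.card {π : Perm (Fin (n + 1)) //
      Avoids2d13 π ∧ π ⟨n + 1 - 1, by omega⟩ = ⟨k + 1 - 1, by omega⟩} = avoiderCount n k := by
    simp only [avoiderCount, Fin.ext_iff, Nat.add_sub_cancel]
    rfl
  rw [hcard, show 2 * (n + 1) - (k + 1) - 1 = 2 * n - k by omega, Nat.add_sub_cancel]
  zify
  rw [avoiderCount_eq_ballot (by omega)]
  exact succ_mul_ballot (by omega)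
end

section
/- For every n ≥ 1, the number of permutations π ∈ S_n that avoid both generalized patterns 1-23 and 1-32 and satisfy π_n = 1 equals I_{n-1}, the number of involutions in S_{n-1}. -/
/-!
Avoiding both 1-23 and 1-32 says that no two adjacent entries both exceed an earlier entry, i.e.
of any two adjacent positions at least one holds a left-to-right minimum. Such a permutation
ending in its minimum splits into blocks, each a left-to-right minimum possibly followed by one
larger entry, with decreasing block minima. Pairing the entries of each block gives an involution
of the values fixing the minimum. Conversely, listing the cycles of such an involution by
decreasing minimum, smaller entry first, recovers the permutation: it is `Tuple.sort` for the
lexicographic key (cycle minimum reversed, entry).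
-/

/-- `π` avoids the generalized pattern 1-23. -/
def Avoids1d23 {n : ℕ} (π : Equiv.Perm (Fin n)) : Prop :=
  ¬ ∃ (i j : Fin n) (h : j.1 + 1 < n), i < j ∧ π i < π j ∧ π j < π ⟨j.1 + 1, h⟩

/-- `π` avoids the generalized pattern 1-32. -/
def Avoids1d32 {n : ℕ} (π : Equiv.Perm (Fin n)) : Prop :=
  ¬ ∃ (i j : Fin n) (h : j.1 + 1 < n), i < j ∧ π i < π ⟨j.1 + 1, h⟩ ∧ π ⟨j.1 + 1, h⟩ < π j

/-- The number of involutions in the symmetric group `S m`. -/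
noncomputable def invCount (m : ℕ) : ℕ := Nat.card {σ : Equiv.Perm (Fin m) // σ * σ = 1}

open Equiv Equiv.Perm Function OrderDual

lemma Prod.Lex.eq_and_lt_lt_of_toLex_lt_lt {α β : Type*} [LinearOrder α] [LinearOrder β]
    {a b : α} {x y z : β} (h₁ : toLex (a, x) < toLex (b, y))
    (h₂ : toLex (b, y) < toLex (a, z)) : b = a ∧ x < y ∧ y < z := by
  rw [Prod.Lex.toLex_lt_toLex] at h₁ h₂
  rcases h₁ with h₁ | ⟨rfl, h₁⟩ <;> rcases h₂ with h₂ | ⟨h₂, h₂'⟩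
  exacts [(lt_asymm h₁ h₂).elim, (h₂ ▸ h₁).false.elim, (lt_irrefl _ h₂).elim,
    ⟨h₂, h₁, h₂'⟩]

lemma Equiv.Perm.involutive_of_mul_self_eq_one {α : Type*} {σ : Perm α} (h : σ * σ = 1) :
    Involutive σ :=
  fun v => DFunLike.congr_fun h v

section LRMin

variable {n : ℕ} {π : Perm (Fin n)} {p : Fin n}

def IsLRMin (π : Perm (Fin n)) (p : Fin n) : Prop := ∀ q < p, π p < π q

instance (π : Perm (Fin n)) : DecidablePred (IsLRMin π) :=
  fun p => inferInstanceAs (Decidable (∀ q, q < p → π p < π q))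

lemma IsLRMin.le_of_le (hp : IsLRMin π p) {q : Fin n} (hqp : q ≤ p) : π p ≤ π q := by
  rcases hqp.lt_or_eq with h | rfl
  exacts [(hp q h).le, le_rfl]

lemma exists_lt_of_not_isLRMin (hp : ¬ IsLRMin π p) : ∃ q < p, π q < π p := by
  simp only [IsLRMin, not_forall, not_lt] at hp
  obtain ⟨q, hqp, hle⟩ := hp
  exact ⟨q, hqp, hle.lt_of_ne (π.injective.ne hqp.ne)⟩

lemma isLRMin_or_isLRMin_iff {j k : Fin n} (hjk : k.1 = j.1 + 1) :
    IsLRMin π j ∨ IsLRMin π k ↔ ∀ i < j, π j < π i ∨ π k < π i := by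
  have hjk' : j < k := Fin.lt_def.2 (by omega)
  refine ⟨fun h i hi => h.imp (· i hi) (· i (hi.trans hjk')), fun h => ?_⟩
  refine or_iff_not_imp_left.2 fun hj i hik => ?_
  obtain ⟨i₀, hi₀j, hi₀⟩ := exists_lt_of_not_isLRMin hj
  have hkj : π k < π j := ((h i₀ hi₀j).resolve_left hi₀.not_gt).trans hi₀
  rcases (Fin.le_def.2 (by have := Fin.lt_def.1 hik; omega) : i ≤ j).lt_or_eq with hij | rfl
  exacts [(h i hij).elim hkj.trans id, hkj]

theorem avoids1d23_and_avoids1d32_iff : Avoids1d23 π ∧ Avoids1d32 π ↔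
    ∀ j (h : j.1 + 1 < n), IsLRMin π j ∨ IsLRMin π ⟨j.1 + 1, h⟩ := by
  unfold Avoids1d23 Avoids1d32
  constructor
  · rintro ⟨h23, h32⟩ j h
    refine (isLRMin_or_isLRMin_iff rfl).2 fun i hij => ?_
    by_contra! hle
    have hjk : j ≠ ⟨j.1 + 1, h⟩ := fun h' => by simpa using congrArg Fin.val h'
    have hik : i ≠ ⟨j.1 + 1, h⟩ := fun h' => by
      have := Fin.lt_def.1 hij; simp [h'] at this
    rcases lt_or_gt_of_ne (π.injective.ne hjk) with hlt | hlt
    · exact h23 ⟨i, j, h, hij, hle.1.lt_of_ne (π.injective.ne hij.ne), hlt⟩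
    · exact h32 ⟨i, j, h, hij, hle.2.lt_of_ne (π.injective.ne hik), hlt⟩
  · intro H
    refine ⟨?_, ?_⟩ <;> rintro ⟨i, j, h, hij, h₁, h₂⟩ <;>
      have := (isLRMin_or_isLRMin_iff rfl).1 (H j h) i hij
    · exact this.elim (lt_asymm h₁) (lt_asymm (h₁.trans h₂))
    · exact this.elim (lt_asymm (h₁.trans h₂)) (lt_asymm h₁)

end LRMin

section AdjacentLRMin

variable {m : ℕ} {π : Perm (Fin (m + 1))} {p : Fin (m + 1)}

lemma isLRMin_zero (π : Perm (Fin (m + 1))) : IsLRMin π 0 :=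
  fun q hq => absurd hq (Fin.not_lt_zero q)

lemma isLRMin_of_apply_eq_zero (h : π p = 0) : IsLRMin π p :=
  fun _ hq => h ▸ Fin.pos_iff_ne_zero.2 fun h' => hq.ne (π.injective (h'.trans h.symm))

/-- Positions are added cyclically; `Fin.last m + 1 = 0` is harmless since position `0` always
holds an LR-minimum. -/
def AdjacentLRMin (π : Perm (Fin (m + 1))) : Prop := ∀ p, IsLRMin π p ∨ IsLRMin π (p + 1)

theorem avoids1d23_and_avoids1d32_iff_adjacentLRMin :
    Avoids1d23 π ∧ Avoids1d32 π ↔ AdjacentLRMin π := by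
  have hsucc (j : Fin (m + 1)) (hj : j < Fin.last m) :
      (⟨j.1 + 1, Nat.succ_lt_succ hj⟩ : Fin (m + 1)) = j + 1 :=
    Fin.ext (Fin.val_add_one_of_lt hj).symm
  rw [avoids1d23_and_avoids1d32_iff]
  refine ⟨fun h p => ?_, fun h j hj => ?_⟩
  · rcases (Fin.le_last p).lt_or_eq with hp | rfl
    · simpa [hsucc p hp] using h p (by simpa [Fin.lt_def] using hp)
    · exact .inr (by simpa using isLRMin_zero π)
  · simpa [hsucc j (Fin.lt_def.2 (by simpa using hj))] using h j

lemma IsLRMin.lt_add_one (hp : IsLRMin π p) (h : ¬ IsLRMin π (p + 1)) : π p < π (p + 1) := by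
  obtain ⟨q, hq, hlt⟩ := exists_lt_of_not_isLRMin h
  exact (hp.le_of_le (le_of_not_gt fun hpq => (Fin.add_one_le_of_lt hpq).not_gt hq)).trans_lt hlt

lemma AdjacentLRMin.isLRMin_sub_one (hπ : AdjacentLRMin π) (hp : ¬ IsLRMin π p) :
    IsLRMin π (p - 1) :=
  (hπ (p - 1)).resolve_right (by rwa [sub_add_cancel])

def partner (π : Perm (Fin (m + 1))) (p : Fin (m + 1)) : Fin (m + 1) :=
  if ¬ IsLRMin π p then p - 1 else if IsLRMin π (p + 1) then p else p + 1

lemma partner_of_not_isLRMin (hp : ¬ IsLRMin π p) : partner π p = p - 1 := if_pos hp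

lemma partner_of_isLRMin_add_one (hp : IsLRMin π p) (h : IsLRMin π (p + 1)) :
    partner π p = p := by
  simp [partner, hp, h]

lemma partner_of_not_isLRMin_add_one (hp : IsLRMin π p) (h : ¬ IsLRMin π (p + 1)) :
    partner π p = p + 1 := by
  simp [partner, hp, h]

lemma AdjacentLRMin.partner_involutive (hπ : AdjacentLRMin π) : Involutive (partner π) := by
  intro p
  by_cases hp : IsLRMin π p
  · by_cases h : IsLRMin π (p + 1)
    · rw [partner_of_isLRMin_add_one hp h, partner_of_isLRMin_add_one hp h]
    · rw [partner_of_not_isLRMin_add_one hp h, partner_of_not_isLRMin h, add_sub_cancel_right]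
  · rw [partner_of_not_isLRMin hp, partner_of_not_isLRMin_add_one (hπ.isLRMin_sub_one hp)
      (by rwa [sub_add_cancel]), sub_add_cancel]

lemma IsLRMin.apply_le_apply_partner (hp : IsLRMin π p) : π p ≤ π (partner π p) := by
  by_cases h : IsLRMin π (p + 1)
  · rw [partner_of_isLRMin_add_one hp h]
  · rw [partner_of_not_isLRMin_add_one hp h]
    exact (hp.lt_add_one h).le

lemma partner_le_of_isLRMin_add_one (h : IsLRMin π (p + 1)) : partner π p ≤ p := by
  by_cases hp : IsLRMin π p
  · rw [partner_of_isLRMin_add_one hp h]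
  · rw [partner_of_not_isLRMin hp]
    refine (Fin.sub_one_lt_iff.2 (Fin.pos_iff_ne_zero.2 ?_)).le
    rintro rfl
    exact hp (isLRMin_zero π)

def valuePartner (π : Perm (Fin (m + 1))) (v : Fin (m + 1)) : Fin (m + 1) :=
  π (partner π (π.symm v))

lemma AdjacentLRMin.valuePartner_involutive (hπ : AdjacentLRMin π) :
    Involutive (valuePartner π) := by
  intro v
  simp [valuePartner, hπ.partner_involutive _]

lemma valuePartner_zero (h : π (Fin.last m) = 0) : valuePartner π 0 = 0 := by
  have hmin := isLRMin_of_apply_eq_zero h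
  rw [valuePartner, ← h, symm_apply_apply, partner_of_isLRMin_add_one hmin
    (by simpa using isLRMin_zero π)]

end AdjacentLRMin

section SortsBlocks

variable {n : ℕ} {f : Fin n → Fin n} {π : Perm (Fin n)} {v : Fin n}

/-- `toDual` because the blocks `{v, f v}` are to be listed by decreasing minimum. -/
def blockKey (f : Fin n → Fin n) (v : Fin n) : (Fin n)ᵒᵈ := toDual (min v (f v))

lemma blockKey_apply_self (hf : Involutive f) (v : Fin n) : blockKey f (f v) = blockKey f v := by
  simp [blockKey, hf v, min_comm]

def SortsBlocks (f : Fin n → Fin n) (π : Perm (Fin n)) : Prop :=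
  StrictMono fun p => toLex (blockKey f (π p), π p)

lemma sortsBlocks_iff_eq_sort : SortsBlocks f π ↔ π = Tuple.sort (blockKey f) :=
  Tuple.eq_sort_iff'.symm

lemma SortsBlocks.symm_lt_symm (hs : SortsBlocks f π) (hf : Involutive f) (hv : f v < v) :
    π.symm (f v) < π.symm v := by
  refine hs.lt_iff_lt.1 ?_
  simp only [apply_symm_apply, blockKey_apply_self hf, Prod.Lex.toLex_lt_toLex, lt_irrefl,
    false_or, true_and, hv]

lemma SortsBlocks.isLRMin_iff (hs : SortsBlocks f π) (hf : Involutive f) :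
    IsLRMin π (π.symm v) ↔ v ≤ f v := by
  refine ⟨fun h => le_of_not_gt fun hv => ?_, fun hv q hq => ?_⟩
  · simpa [hv.not_gt] using h _ (hs.symm_lt_symm hf hv)
  · have hkey : blockKey f (π q) ≤ blockKey f v := by
      have := hs hq
      simp only [apply_symm_apply, Prod.Lex.toLex_lt_toLex] at this
      exact this.elim le_of_lt (fun h => h.1.le)
    have hle : v ≤ π q := by
      simpa [blockKey, min_eq_left hv] using (toDual_le_toDual.1 hkey).trans (min_le_left _ _)
    simpa using hle.lt_of_ne (by rintro rfl; simp at hq)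

end SortsBlocks

section SortsBlocksSucc

variable {m : ℕ} {f : Fin (m + 1) → Fin (m + 1)} {π : Perm (Fin (m + 1))} {v : Fin (m + 1)}

lemma SortsBlocks.symm_add_one (hs : SortsBlocks f π) (hf : Involutive f) (hv : f v < v) :
    π.symm (f v) + 1 = π.symm v := by
  have hlt := hs.symm_lt_symm hf hv
  by_contra hne
  have h₁ := hs (Fin.lt_add_one_iff.2 (hlt.trans_le (Fin.le_last _)))
  have h₂ := hs ((Fin.add_one_le_of_lt hlt).lt_of_ne hne)
  simp only [apply_symm_apply, blockKey_apply_self hf] at h₁ h₂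
  obtain ⟨hkey, hvw, hwv⟩ := Prod.Lex.eq_and_lt_lt_of_toLex_lt_lt h₁ h₂
  set w := π (π.symm (f v) + 1)
  have hmin : min w (f w) = f v := by
    rwa [blockKey, blockKey, toDual_inj, min_eq_right hv.le] at hkey
  have hfw : f w = f v := (min_choice w (f w)).resolve_left (fun h => hvw.ne' (h ▸ hmin)) ▸ hmin
  exact hwv.ne (hf.injective hfw)

lemma SortsBlocks.apply_last (hs : SortsBlocks f π) (hf : Involutive f) (hf0 : f 0 = 0) :
    π (Fin.last m) = 0 := by
  by_contra hw
  have hfw : f (π (Fin.last m)) ≠ 0 := fun h => hw (by rw [← hf (π _), h, hf0])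
  have hlt : toLex (blockKey f (π (Fin.last m)), π (Fin.last m)) <
      toLex (blockKey f (π (π.symm 0)), π (π.symm 0)) := by
    simp only [apply_symm_apply, blockKey, hf0, min_self, Prod.Lex.toLex_lt_toLex,
      toDual_lt_toDual]
    exact .inl (lt_min (Fin.pos_iff_ne_zero.2 hw) (Fin.pos_iff_ne_zero.2 hfw))
  exact (hs.lt_iff_lt.1 hlt).not_ge (Fin.le_last _)

lemma SortsBlocks.adjacentLRMin (hs : SortsBlocks f π) (hf : Involutive f) :
    AdjacentLRMin π := by
  intro p
  refine or_iff_not_imp_right.2 fun h => ?_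
  rw [← symm_apply_apply π (p + 1), hs.isLRMin_iff hf, not_le] at h
  rw [← add_right_cancel_iff.1 ((hs.symm_add_one hf h).trans (symm_apply_apply π _)),
    hs.isLRMin_iff hf, hf]
  exact h.le

lemma SortsBlocks.partner_symm (hs : SortsBlocks f π) (hf : Involutive f) (v : Fin (m + 1)) :
    partner π (π.symm v) = π.symm (f v) := by
  rcases lt_trichotomy (f v) v with hlt | heq | hgt
  · rw [partner_of_not_isLRMin (by rw [hs.isLRMin_iff hf]; exact hlt.not_ge),
      ← hs.symm_add_one hf hlt, add_sub_cancel_right]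
  · have hmin : IsLRMin π (π.symm v) := (hs.isLRMin_iff hf).2 heq.ge
    rw [heq, partner_of_isLRMin_add_one hmin]
    by_contra h
    set u := π (π.symm v + 1)
    have hu : π.symm u = π.symm v + 1 := symm_apply_apply π _
    rw [← hu, hs.isLRMin_iff hf, not_le] at h
    have hfu : f u = v := π.symm.injective (add_right_cancel ((hs.symm_add_one hf h).trans hu))
    have huv : u = v := by rw [← hf u, hfu, heq]
    rw [hfu, huv] at h
    exact lt_irrefl v h
  · have hadj := hs.symm_add_one hf (show f (f v) < f v by rwa [hf])
    rw [hf] at hadj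
    rw [partner_of_not_isLRMin_add_one ((hs.isLRMin_iff hf).2 hgt.le), hadj]
    rw [hadj, hs.isLRMin_iff hf, hf, not_le]
    exact hgt

end SortsBlocksSucc

lemma AdjacentLRMin.sortsBlocks_valuePartner {m : ℕ} {π : Perm (Fin (m + 1))}
    (hπ : AdjacentLRMin π) : SortsBlocks (valuePartner π) π := by
  have hkey (p) : blockKey (valuePartner π) (π p) = toDual (min (π p) (π (partner π p))) := by
    simp [blockKey, valuePartner]
  rw [SortsBlocks, Fin.strictMono_iff_lt_succ]
  intro i
  simp only [hkey, ← Fin.coeSucc_eq_succ, Prod.Lex.toLex_lt_toLex, toDual_lt_toDual, toDual_inj]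
  set p := i.castSucc
  have hp : p < p + 1 := Fin.lt_add_one_iff.2 (Fin.castSucc_lt_last i)
  by_cases h : IsLRMin π (p + 1)
  · left
    rw [min_eq_left h.apply_le_apply_partner]
    exact lt_min (h p hp) (h _ ((partner_le_of_isLRMin_add_one h).trans_lt hp))
  · right
    have hmin := (hπ p).resolve_right h
    rw [partner_of_not_isLRMin_add_one hmin h, partner_of_not_isLRMin h, add_sub_cancel_right,
      min_comm]
    exact ⟨rfl, hmin.lt_add_one h⟩

def adjacentLRMinEquiv (m : ℕ) :
    {π : Perm (Fin (m + 1)) // AdjacentLRMin π ∧ π (Fin.last m) = 0} ≃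
      {σ : Perm (Fin (m + 1)) // σ * σ = 1 ∧ σ 0 = 0} where
  toFun π := ⟨π.2.1.valuePartner_involutive.toPerm _,
    Perm.ext π.2.1.valuePartner_involutive, valuePartner_zero π.2.2⟩
  invFun σ :=
    have hσ := involutive_of_mul_self_eq_one σ.2.1
    have hs : SortsBlocks σ.1 (Tuple.sort (blockKey σ.1)) := sortsBlocks_iff_eq_sort.2 rfl
    ⟨Tuple.sort (blockKey σ.1), hs.adjacentLRMin hσ, hs.apply_last hσ σ.2.2⟩
  left_inv π := Subtype.ext (sortsBlocks_iff_eq_sort.1 π.2.1.sortsBlocks_valuePartner).symm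
  right_inv σ := Subtype.ext <| Perm.ext fun v => by
    simp [valuePartner, (sortsBlocks_iff_eq_sort.2 rfl).partner_symm
      (involutive_of_mul_self_eq_one σ.2.1)]

lemma Equiv.Perm.decomposeFin_symm_zero_mul {m : ℕ} (e e' : Perm (Fin m)) :
    decomposeFin.symm (0, e * e') = decomposeFin.symm (0, e) * decomposeFin.symm (0, e') := by
  ext x
  cases x using Fin.cases <;> simp

lemma Equiv.Perm.decomposeFin_symm_zero_mul_self_eq_one_iff {m : ℕ} (e : Perm (Fin m)) :
    decomposeFin.symm (0, e) * decomposeFin.symm (0, e) = 1 ↔ e * e = 1 := by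
  have hone : decomposeFin.symm (0, (1 : Perm (Fin m))) = 1 := by
    rw [decomposeFin_symm_of_one, swap_self]; rfl
  rw [← decomposeFin_symm_zero_mul, ← hone, decomposeFin.symm.injective.eq_iff]
  simp

lemma Equiv.Perm.decomposeFin_symm_zero_snd {m : ℕ} {σ : Perm (Fin (m + 1))} (h : σ 0 = 0) :
    decomposeFin.symm (0, (decomposeFin σ).2) = σ := by
  have h0 := decomposeFin_symm_apply_zero (decomposeFin σ).1 (decomposeFin σ).2
  rw [Prod.mk.eta, symm_apply_apply, h] at h0
  rw [h0, Prod.mk.eta, symm_apply_apply]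

def involutionFixingZeroEquiv (m : ℕ) :
    {σ : Perm (Fin (m + 1)) // σ * σ = 1 ∧ σ 0 = 0} ≃ {σ : Perm (Fin m) // σ * σ = 1} where
  toFun σ := ⟨(decomposeFin σ.1).2, by
    rw [← decomposeFin_symm_zero_mul_self_eq_one_iff, decomposeFin_symm_zero_snd σ.2.2]
    exact σ.2.1⟩
  invFun e := ⟨decomposeFin.symm (0, e.1),
    (decomposeFin_symm_zero_mul_self_eq_one_iff e.1).2 e.2, decomposeFin_symm_apply_zero _ _⟩
  left_inv σ := Subtype.ext (decomposeFin_symm_zero_snd σ.2.2)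
  right_inv e := by simp

theorem count_ending_one (n : ℕ) (hn : 1 ≤ n) :
    Nat.card {π : Equiv.Perm (Fin n) // Avoids1d23 π ∧ Avoids1d32 π ∧
      π ⟨n - 1, by omega⟩ = ⟨0, by omega⟩} = invCount (n - 1) := by
  obtain ⟨m, rfl⟩ : ∃ m, n = m + 1 := ⟨n - 1, by omega⟩
  simp only [invCount, Nat.add_sub_cancel, Fin.zero_eta]
  refine Nat.card_congr <| (Equiv.subtypeEquivRight fun π => ?_).trans <|
    (adjacentLRMinEquiv m).trans (involutionFixingZeroEquiv m)
  rw [← and_assoc, avoids1d23_and_avoids1d32_iff_adjacentLRMin]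
  rfl
end

section
/- Every permutation π ∈ S_n that avoids both generalized patterns 1-23 and 21-3 also avoids the generalized pattern 12-3; hence the set of permutations of S_n avoiding {1-23, 21-3} coincides with the set of those avoiding {1-23, 21-3, 12-3}. -/
/-- `π` avoids the generalized pattern 21-3. -/
def Avoids21d3 {n : ℕ} (π : Equiv.Perm (Fin n)) : Prop :=
  ¬ ∃ (i j : Fin n) (h : i.1 + 1 < n), i.1 + 1 < j.1 ∧ π ⟨i.1 + 1, h⟩ < π i ∧ π i < π j

/-- `π` avoids the generalized pattern 12-3. -/
def Avoids12d3 {n : ℕ} (π : Equiv.Perm (Fin n)) : Prop :=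
  ¬ ∃ (i j : Fin n) (h : i.1 + 1 < n), i.1 + 1 < j.1 ∧ π i < π ⟨i.1 + 1, h⟩ ∧ π ⟨i.1 + 1, h⟩ < π j

theorem avoiding_pair_avoids_12d3 (n : ℕ) (π : Equiv.Perm (Fin n)) :
    (Avoids1d23 π ∧ Avoids21d3 π) ↔ (Avoids1d23 π ∧ Avoids21d3 π ∧ Avoids12d3 π) := by
  refine ⟨fun ⟨h1, h2⟩ => ⟨h1, h2, ?_⟩, fun ⟨h1, h2, _⟩ => ⟨h1, h2⟩⟩
  rintro ⟨i, j, h, hij, ha, hb⟩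
  have hjn : j.1 < n := j.isLt
  by_cases hc : i.1 + 2 = j.1
  · -- j = i+2 : 1-23 occurrence at (i, i+1, i+2)
    have h' : i.1 + 1 + 1 < n := by omega
    have hj : (⟨i.1 + 1 + 1, h'⟩ : Fin n) = j := Fin.ext (by simp; omega)
    exact h1 ⟨i, ⟨i.1 + 1, h⟩, h', by simp [Fin.lt_def], ha, by rw [hj]; exact hb⟩
  · have hlt : i.1 + 2 < j.1 := by omega
    have h2' : i.1 + 2 < n := by omega
    set k : Fin n := ⟨i.1 + 2, h2'⟩ with hk
    have hne : π ⟨i.1 + 1, h⟩ ≠ π k := fun heq => by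
      have := π.injective heq
      simp [hk, Fin.ext_iff] at this
    rcases lt_or_gt_of_ne hne with hlt1 | hgt1
    · -- ascent at i+1 : 1-23 occurrence at (i, i+1, i+2)
      exact h1 ⟨i, ⟨i.1 + 1, h⟩, by simpa using h2', by simp [Fin.lt_def], ha, hlt1⟩
    · -- descent at i+1 : 21-3 occurrence at (i+1, i+2, j)
      exact h2 ⟨⟨i.1 + 1, h⟩, j, by simpa using h2', by simpa using hlt, hgt1, hb⟩
end

section
/- Let a_{n,k} denote the number of permutations π ∈ S_n that avoid both generalized patterns 1-23 and 21-3 and satisfy π_n = k. Then a_{n,k} = 0 whenever k ≥ ⌊n/2⌋ + 2; that is, no permutation of length n avoiding both 1-23 and 21-3 can end with an entry greater than or equal to ⌊n/2⌋ + 2. -/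
/-- `a n k` is the number of permutations of `S n` avoiding both `1-23` and `21-3`
whose last entry equals `k`. -/
noncomputable def a (n k : ℕ) : ℕ :=
  Nat.card {π : Equiv.Perm (Fin n) // Avoids1d23 π ∧ Avoids21d3 π ∧
    ∃ h : n - 1 < n, (π ⟨n - 1, h⟩).1 + 1 = k}

/-!
Let `v` be the last entry of `π`. Every position `p` with `π p < v` is followed by a larger
entry: otherwise `π (p + 1) < π p < v` is an occurrence of 21-3 (or `p + 1` is the last position).
Hence two such positions cannot be adjacent, as `π p < π (p + 1) < π (p + 2)` would be an
occurrence of 1-23. The `v - 1` positions carrying entries below `v` therefore form a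
non-adjacent subset of the first `n - 1` positions, so `v - 1 ≤ ⌊n / 2⌋`.
-/

open Finset

theorem Finset.card_le_of_forall_lt_of_succ_notMem {m : ℕ} (S : Finset ℕ)
    (hlt : ∀ p ∈ S, p < m) (hsep : ∀ p ∈ S, p + 1 ∉ S) : #S ≤ (m + 1) / 2 := by
  calc #S ≤ #(range ((m + 1) / 2)) := by
        refine card_le_card_of_injOn (· / 2) (fun p hp => ?_) (fun p hp q hq hpq => ?_)
        · have := hlt p hp
          simp only [coe_range, Set.mem_Iio]
          omega
        · by_contra hne
          have : q = p + 1 ∨ p = q + 1 := by simp only at hpq; omega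
          rcases this with rfl | rfl
          · exact hsep p hp hq
          · exact hsep q hq hp
    _ = (m + 1) / 2 := card_range _

theorem Equiv.Perm.card_filter_apply_lt {n : ℕ} (π : Equiv.Perm (Fin n)) (v : Fin n) :
    #{p | π p < v} = v := by
  rw [← Fin.card_Iio v]
  exact card_nbij' π π.symm (fun _ => by simp) (fun _ => by simp) (fun _ _ => by simp)
    (fun _ _ => by simp)

theorem Avoids21d3.lt_succ_of_lt {n : ℕ} {π : Equiv.Perm (Fin n)} (h : Avoids21d3 π)
    {p j : Fin n} (hpj : p.1 + 1 < j.1) (hlt : π p < π j) :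
    π p < π ⟨p.1 + 1, hpj.trans j.2⟩ := by
  refine lt_of_le_of_ne (not_lt.1 fun hdesc => h ⟨p, j, _, hpj, hdesc, hlt⟩) fun heq => ?_
  simpa [Fin.ext_iff] using π.injective heq

section LastEntry

variable {m : ℕ} {π : Equiv.Perm (Fin (m + 1))}

theorem Avoids21d3.lt_succ_of_lt_last (h : Avoids21d3 π) {p : Fin (m + 1)} (hp : p.1 + 1 < m + 1)
    (hlt : π p < π (Fin.last m)) : π p < π ⟨p.1 + 1, hp⟩ := by
  rcases (Nat.lt_succ_iff.1 hp).lt_or_eq with hpm | hpm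
  · exact h.lt_succ_of_lt hpm hlt
  · rwa [show (⟨p.1 + 1, hp⟩ : Fin (m + 1)) = Fin.last m from Fin.ext hpm]

theorem val_lt_of_apply_lt_apply_last {p : Fin (m + 1)} (hlt : π p < π (Fin.last m)) :
    p.1 < m :=
  Fin.val_lt_last fun hp => (hlt.trans_eq (congrArg π hp.symm)).false

theorem not_apply_succ_lt_apply_last (h123 : Avoids1d23 π) (h213 : Avoids21d3 π)
    {p : Fin (m + 1)} (hp : p.1 + 1 < m + 1) (hlt : π p < π (Fin.last m)) :
    ¬ π ⟨p.1 + 1, hp⟩ < π (Fin.last m) := fun hsucc =>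
  h123 ⟨p, _, Nat.succ_lt_succ (val_lt_of_apply_lt_apply_last hsucc), Fin.lt_def.2 (by simp),
    h213.lt_succ_of_lt_last hp hlt, h213.lt_succ_of_lt_last _ hsucc⟩

theorem val_apply_last_le (h123 : Avoids1d23 π) (h213 : Avoids21d3 π) :
    (π (Fin.last m) : ℕ) ≤ (m + 1) / 2 := by
  set S : Finset (Fin (m + 1)) := {p | π p < π (Fin.last m)}
  have hmem : ∀ p, p ∈ S ↔ π p < π (Fin.last m) := fun p => by simp [S]
  calc (π (Fin.last m) : ℕ) = #(S.map Fin.valEmbedding) := by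
        rw [card_map, π.card_filter_apply_lt]
    _ ≤ (m + 1) / 2 := by
        refine card_le_of_forall_lt_of_succ_notMem _ ?_ ?_
        · simp only [mem_map, Fin.valEmbedding_apply, forall_exists_index, and_imp,
            forall_apply_eq_imp_iff₂]
          exact fun p hp => val_lt_of_apply_lt_apply_last ((hmem p).1 hp)
        · simp only [mem_map, Fin.valEmbedding_apply, forall_exists_index, and_imp,
            forall_apply_eq_imp_iff₂, not_exists, not_and]
          intro p hp q hq hqp
          have hp' := (hmem p).1 hp
          have hsucc : p.1 + 1 < m + 1 := Nat.succ_lt_succ (val_lt_of_apply_lt_apply_last hp')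
          refine not_apply_succ_lt_apply_last h123 h213 hsucc hp' ?_
          rwa [show (⟨p.1 + 1, hsucc⟩ : Fin (m + 1)) = q from Fin.ext hqp.symm, ← hmem]

end LastEntry

theorem a_vanishes (n k : ℕ) (hk : n / 2 + 2 ≤ k) :
    a n k = 0 := by
  refine Nat.card_eq_zero.2 (Or.inl ⟨fun ⟨π, h123, h213, hlt, hπk⟩ => ?_⟩)
  obtain ⟨m, rfl⟩ : ∃ m, n = m + 1 := ⟨n - 1, by omega⟩
  have hlast : (⟨m + 1 - 1, hlt⟩ : Fin (m + 1)) = Fin.last m := Fin.ext (by simp)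
  have := val_apply_last_le h123 h213
  rw [hlast] at hπk
  omega
end

section
/- Let M be the formal power series over ℤ with constant term 1 satisfying M = 1 + X·M + X²·M² (the generating function of the Motzkin numbers), and for k ≥ 0 let C_k = Σ_{n≥0} b_{n,k} X^n, where b_{n,k} is the number of permutations π ∈ S_{n+1} that avoid both generalized patterns 1-23 and 21-3 and satisfy π_{n+1} = k+1. Then C_0 = M, and for every k ≥ 1, C_k = X^{2(k-1)} · M^{k-1} · (M - 1). -/
/-!
Delete the last entry `k` of an avoiding permutation of length `n + 1` and standardize: what is
left is an avoiding permutation `U` of length `n`, and the pairs `(U, k)` that arise are those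
where `k` is at most every descent top of `U`, and at most the last entry of `U` unless that
entry is `0`. If the last entry of `U` is positive, `U` accepts exactly the values up to it;
if it is `0`, `U` accepts `k + 2` exactly when the permutation left after deleting that `0`
accepts `k + 1` and does not itself end in `0`. This gives, for the
column series `C k` and the tail sums `S k = ∑ j > k, C j`, the linear system
`C 0 = 1 + X C 0 + X S 0`, `C 1 = C 0 - 1`, `C (k + 2) = X S (k + 1) + X² S k`,
`S k = C (k + 1) + S (k + 1)` with `X ^ (k + 1) ∣ S k`. Such a system has at most one
solution, and `M = 1 + X M + X² M²` shows that the claimed columns, together with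
`S k = X ^ (2k + 1) M ^ (k + 2)`, solve it.
-/

open Equiv PowerSeries

lemma Nat.card_subtype_eq_card_and_add_card_and_not {α : Type*} [Finite α] (P Q : α → Prop) :
    Nat.card {x // P x} = Nat.card {x // P x ∧ Q x} + Nat.card {x // P x ∧ ¬Q x} := by
  classical
  rw [← Nat.card_congr (Equiv.sumCompl fun y : {x // P x} => Q y), Nat.card_sum,
    Nat.card_congr (Equiv.subtypeSubtypeEquivSubtypeInter P Q),
    Nat.card_congr (Equiv.subtypeSubtypeEquivSubtypeInter P (¬Q ·))]

namespace Equiv.Perm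

variable {m n : ℕ}

/-- Out of range the value is `0`, so that the "last entry" `π.entry (n - 1)` of the empty
permutation is `0`. -/
def entry (π : Perm (Fin n)) (j : ℕ) : ℕ :=
  if h : j < n then π ⟨j, h⟩ else 0

lemma entry_of_lt (π : Perm (Fin n)) {j : ℕ} (h : j < n) : π.entry j = π ⟨j, h⟩ := dif_pos h

@[simp]
lemma entry_val (π : Perm (Fin n)) (i : Fin n) : π.entry i = π i := π.entry_of_lt i.2

lemma entry_of_le (π : Perm (Fin n)) {j : ℕ} (h : n ≤ j) : π.entry j = 0 :=
  dif_neg (Nat.not_lt.2 h)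

lemma entry_lt (π : Perm (Fin n)) {j : ℕ} (h : j < n) : π.entry j < n := by
  rw [π.entry_of_lt h]; exact (π _).2

lemma exists_entry_lt_of_ne_zero (π : Perm (Fin n)) {j : ℕ} (hj : j < n) (h : π.entry j ≠ 0) :
    ∃ i < n, i ≠ j ∧ π.entry i < π.entry j := by
  set i := π.symm ⟨0, by omega⟩
  have hi : π.entry i = 0 := by simp [i]
  exact ⟨i, i.2, fun hij => h (hij ▸ hi), by omega⟩

/-- `π.snoc k` is the permutation of `Fin (m + 1)` ending with `k` whose first `m` entries are
in the same relative order as the entries of `π`. -/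
def snoc (π : Perm (Fin m)) (k : Fin (m + 1)) : Perm (Fin (m + 1)) :=
  ((finSuccEquiv' (Fin.last m)).trans (Equiv.optionCongr π)).trans (finSuccEquiv' k).symm

@[simp]
lemma snoc_last (π : Perm (Fin m)) (k : Fin (m + 1)) : π.snoc k (Fin.last m) = k := by
  simp [snoc, finSuccEquiv'_at, finSuccEquiv'_symm_none]

@[simp]
lemma snoc_castSucc (π : Perm (Fin m)) (k : Fin (m + 1)) (i : Fin m) :
    π.snoc k i.castSucc = k.succAbove (π i) := by
  simp [snoc, ← Fin.succAbove_last, finSuccEquiv'_succAbove, finSuccEquiv'_symm_some]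

lemma snoc_injective :
    Function.Injective fun x : Fin (m + 1) × Perm (Fin m) => x.2.snoc x.1 := by
  rintro ⟨k, π⟩ ⟨k', π'⟩ h
  have hk : k = k' := by simpa using congrArg (· (Fin.last m)) h
  subst hk
  refine Prod.ext rfl (Equiv.ext fun i => Fin.succAbove_right_injective (p := k) ?_)
  simpa using congrArg (· i.castSucc) h

lemma snoc_bijective :
    Function.Bijective fun x : Fin (m + 1) × Perm (Fin m) => x.2.snoc x.1 :=
  (Fintype.bijective_iff_injective_and_card _).2
    ⟨snoc_injective, by simp [Fintype.card_perm, Nat.factorial_succ]⟩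

lemma entry_snoc_self (π : Perm (Fin m)) (k : Fin (m + 1)) : (π.snoc k).entry m = k := by
  simpa using (π.snoc k).entry_val (Fin.last m)

lemma entry_snoc_of_lt (π : Perm (Fin m)) (k : Fin (m + 1)) {j : ℕ} (hj : j < m) :
    (π.snoc k).entry j = if π.entry j < k then π.entry j else π.entry j + 1 := by
  have := (π.snoc k).entry_val (Fin.castSucc ⟨j, hj⟩)
  rw [Fin.val_castSucc, snoc_castSucc] at this
  rw [this, π.entry_of_lt hj]
  rcases lt_or_ge (π ⟨j, hj⟩ : ℕ) k with h | h
  · rw [Fin.succAbove_of_castSucc_lt _ _ h, if_pos h, Fin.val_castSucc]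
  · rw [Fin.succAbove_of_le_castSucc _ _ h, if_neg (not_lt.2 h), Fin.val_succ]

lemma entry_snoc_lt_entry_snoc_iff (π : Perm (Fin m)) (k : Fin (m + 1)) {i j : ℕ}
    (hi : i < m) (hj : j < m) :
    (π.snoc k).entry i < (π.snoc k).entry j ↔ π.entry i < π.entry j := by
  rw [entry_snoc_of_lt _ _ hi, entry_snoc_of_lt _ _ hj]; split_ifs <;> omega

lemma entry_snoc_lt_iff (π : Perm (Fin m)) (k : Fin (m + 1)) {j : ℕ} (hj : j < m) :
    (π.snoc k).entry j < k ↔ π.entry j < k := by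
  rw [entry_snoc_of_lt _ _ hj]; split_ifs <;> omega

lemma card_snoc (P : Perm (Fin (m + 1)) → Prop) (k : Fin (m + 1)) :
    Nat.card {π : Perm (Fin m) // P (π.snoc k)} =
      Nat.card {σ : Perm (Fin (m + 1)) // P σ ∧ σ.entry m = k} := by
  refine Nat.card_congr (Equiv.ofBijective (fun π => ⟨π.1.snoc k, π.2, entry_snoc_self _ _⟩)
    ⟨fun π π' h => ?_, fun σ => ?_⟩)
  · exact Subtype.ext (congrArg Prod.snd (snoc_injective (a₁ := (k, π.1)) (a₂ := (k, π'.1))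
      (congrArg Subtype.val h)))
  · obtain ⟨⟨k', π⟩, hπ⟩ := snoc_bijective.2 σ.1
    have hk : k' = k := Fin.ext (by simpa [← hπ, entry_snoc_self] using σ.2.2)
    subst hk
    exact ⟨⟨π, by simpa [hπ] using σ.2.1⟩, Subtype.ext hπ⟩

end Equiv.Perm

section Avoidance

open Equiv.Perm

variable {n : ℕ}

lemma avoids1d23_iff (π : Perm (Fin n)) :
    Avoids1d23 π ↔ ∀ i j, i < j → j + 1 < n →
      ¬(π.entry i < π.entry j ∧ π.entry j < π.entry (j + 1)) := by
  simp only [Avoids1d23, Fin.lt_def, ← entry_val, not_exists, not_and]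
  exact ⟨fun h i j hij hj => h ⟨i, by omega⟩ ⟨j, by omega⟩ hj hij,
    fun h i j hj hij => h i j hij hj⟩

lemma avoids21d3_iff (π : Perm (Fin n)) :
    Avoids21d3 π ↔ ∀ i j, i + 1 < j → j < n →
      ¬(π.entry (i + 1) < π.entry i ∧ π.entry i < π.entry j) := by
  simp only [Avoids21d3, Fin.lt_def, ← entry_val, not_exists, not_and]
  exact ⟨fun h i j hij hj => h ⟨i, by omega⟩ ⟨j, hj⟩ (show i + 1 < n by omega) hij,
    fun h i j hi hij => h i j hij j.2⟩

end Avoidance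

section Snoc

open Equiv.Perm

variable {m n : ℕ}

def AvoidsBoth (π : Perm (Fin n)) : Prop := Avoids1d23 π ∧ Avoids21d3 π

/-- `k` can be appended to `π` as a new last entry (`avoidsBoth_snoc_iff`). -/
def AcceptsLast (π : Perm (Fin m)) (k : ℕ) : Prop :=
  k ≤ m ∧ (∀ i, i + 1 < m → π.entry (i + 1) < π.entry i → k ≤ π.entry i) ∧
    (π.entry (m - 1) ≠ 0 → k ≤ π.entry (m - 1))

lemma avoids1d23_snoc_iff (π : Perm (Fin m)) (k : Fin (m + 1)) :
    Avoids1d23 (π.snoc k) ↔ Avoids1d23 π ∧ (π.entry (m - 1) ≠ 0 → k ≤ π.entry (m - 1)) := by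
  rw [avoids1d23_iff, avoids1d23_iff]
  constructor
  · intro h
    refine ⟨fun i j hij hj => ?_, fun hne => ?_⟩
    · rw [← entry_snoc_lt_entry_snoc_iff π k (by omega) (by omega),
        ← entry_snoc_lt_entry_snoc_iff π k (by omega) hj]
      exact h i j hij (by omega)
    · have hm : 0 < m := Nat.pos_of_ne_zero fun hm => hne (π.entry_of_le (by omega))
      obtain ⟨i, hi, hij, hlt⟩ := π.exists_entry_lt_of_ne_zero (by omega) hne
      by_contra hk
      apply h i (m - 1) (by omega) (by omega)
      rw [Nat.sub_add_cancel hm, entry_snoc_self, entry_snoc_lt_entry_snoc_iff _ _ hi (by omega),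
        entry_snoc_lt_iff _ _ (by omega)]
      omega
  · rintro ⟨h, hlast⟩ i j hij hj
    rcases Nat.lt_or_eq_of_le (show j + 1 ≤ m by omega) with hj | rfl
    · rw [entry_snoc_lt_entry_snoc_iff _ _ (by omega) (by omega),
        entry_snoc_lt_entry_snoc_iff _ _ (by omega) hj]
      exact h i j hij hj
    · rw [entry_snoc_self, entry_snoc_lt_entry_snoc_iff _ _ (by omega) (by omega),
        entry_snoc_lt_iff _ _ (by omega)]
      simp only [Nat.add_sub_cancel] at hlast
      omega

lemma avoids21d3_snoc_iff (π : Perm (Fin m)) (k : Fin (m + 1)) :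
    Avoids21d3 (π.snoc k) ↔
      Avoids21d3 π ∧ ∀ i, i + 1 < m → π.entry (i + 1) < π.entry i → k ≤ π.entry i := by
  rw [avoids21d3_iff, avoids21d3_iff]
  constructor
  · intro h
    refine ⟨fun i j hij hj => ?_, fun i hi hdesc => ?_⟩
    · rw [← entry_snoc_lt_entry_snoc_iff π k (by omega) (by omega),
        ← entry_snoc_lt_entry_snoc_iff π k (by omega) hj]
      exact h i j hij (by omega)
    · by_contra hk
      apply h i m (by omega) (by omega)
      rw [entry_snoc_self, entry_snoc_lt_entry_snoc_iff _ _ hi (by omega),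
        entry_snoc_lt_iff _ _ (by omega)]
      omega
  · rintro ⟨h, hdesc⟩ i j hij hj
    rcases Nat.lt_or_eq_of_le (show j ≤ m by omega) with hj | rfl
    · rw [entry_snoc_lt_entry_snoc_iff _ _ (by omega) (by omega),
        entry_snoc_lt_entry_snoc_iff _ _ (by omega) hj]
      exact h i j hij hj
    · rw [entry_snoc_self, entry_snoc_lt_entry_snoc_iff _ _ (by omega) (by omega),
        entry_snoc_lt_iff _ _ (by omega)]
      have := hdesc i (by omega)
      omega

lemma avoidsBoth_snoc_iff (π : Perm (Fin m)) (k : Fin (m + 1)) :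
    AvoidsBoth (π.snoc k) ↔ AvoidsBoth π ∧ AcceptsLast π k := by
  have := k.is_le
  rw [AvoidsBoth, AvoidsBoth, avoids1d23_snoc_iff, avoids21d3_snoc_iff, AcceptsLast]
  tauto

lemma acceptsLast_zero (π : Perm (Fin m)) : AcceptsLast π 0 :=
  ⟨Nat.zero_le _, fun _ _ _ => Nat.zero_le _, fun _ => Nat.zero_le _⟩

lemma acceptsLast_one (π : Perm (Fin (m + 1))) : AcceptsLast π 1 :=
  ⟨by omega, fun _ _ _ => by omega, fun _ => by omega⟩

lemma acceptsLast_iff_le_entry {k : ℕ} (π : Perm (Fin (m + 1))) (hπ : Avoids21d3 π)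
    (h : π.entry m ≠ 0) : AcceptsLast π k ↔ k ≤ π.entry m := by
  simp only [AcceptsLast, Nat.add_sub_cancel]
  refine ⟨fun hk => hk.2.2 h, fun hk => ⟨?_, fun i hi hdesc => ?_, fun _ => hk⟩⟩
  · have := π.entry_lt (show m < m + 1 by omega)
    omega
  · rcases Nat.lt_or_eq_of_le (show i + 1 ≤ m by omega) with hi | rfl
    · have := (avoids21d3_iff π).1 hπ i m hi (by omega)
      omega
    · omega

lemma acceptsLast_snoc_zero_iff (π : Perm (Fin m)) (k : ℕ) :
    AcceptsLast (π.snoc 0) (k + 2) ↔ AcceptsLast π (k + 1) ∧ π.entry (m - 1) ≠ 0 := by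
  have he : ∀ j < m, (π.snoc 0).entry j = π.entry j + 1 := fun j hj => by
    simp [entry_snoc_of_lt _ _ hj]
  simp only [AcceptsLast, Nat.add_sub_cancel, entry_snoc_self, Fin.val_zero]
  constructor
  · rintro ⟨hkm, hdesc, -⟩
    have hm : 0 < m := by omega
    have htop := hdesc (m - 1) (by omega)
    rw [Nat.sub_add_cancel hm, entry_snoc_self, Fin.val_zero, he _ (by omega)] at htop
    refine ⟨⟨by omega, fun i hi hd => ?_, fun _ => by omega⟩, by omega⟩
    have := hdesc i (by omega)
    rw [he _ (by omega), he _ (by omega)] at this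
    omega
  · rintro ⟨⟨hkm, hdesc, hlast⟩, hne⟩
    have hm : 0 < m := Nat.pos_of_ne_zero fun hm => hne (π.entry_of_le (by omega))
    refine ⟨by omega, fun i hi hd => ?_, fun h => absurd rfl h⟩
    rw [he _ (by omega)]
    rcases Nat.lt_or_eq_of_le (show i + 1 ≤ m by omega) with hi | rfl
    · rw [he _ hi, he _ (by omega)] at hd
      have := hdesc i hi (by omega)
      omega
    · simp only [Nat.add_sub_cancel] at hlast
      have := hlast hne
      omega

end Snoc

section Counting

open Equiv.Perm

noncomputable def numEndingAt (n k : ℕ) : ℕ :=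
  Nat.card {π : Perm (Fin (n + 1)) // AvoidsBoth π ∧ π.entry n = k}

noncomputable def numEndingAbove (n k : ℕ) : ℕ :=
  Nat.card {π : Perm (Fin (n + 1)) // AvoidsBoth π ∧ k < π.entry n}

lemma a_succ_succ (n k : ℕ) : a (n + 1) (k + 1) = numEndingAt n k := by
  refine Nat.card_congr (Equiv.subtypeEquivRight fun π => ?_)
  simp [AvoidsBoth, π.entry_of_lt (Nat.lt_succ_self n), and_assoc]

lemma numEndingAt_eq_zero {n k : ℕ} (h : n < k) : numEndingAt n k = 0 :=
  Nat.card_eq_zero.2 <| Or.inl ⟨fun π => by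
    have := π.1.entry_lt (Nat.lt_succ_self n); omega⟩

lemma numEndingAbove_eq_zero {n k : ℕ} (h : n ≤ k) : numEndingAbove n k = 0 :=
  Nat.card_eq_zero.2 <| Or.inl ⟨fun π => by
    have := π.1.entry_lt (Nat.lt_succ_self n); have := π.2.2; omega⟩

lemma numEndingAt_eq_card_acceptsLast (n k : ℕ) :
    numEndingAt n k = Nat.card {π : Perm (Fin n) // AvoidsBoth π ∧ AcceptsLast π k} := by
  rcases le_or_gt k n with hk | hk
  · rw [numEndingAt, ← card_snoc AvoidsBoth ⟨k, Nat.lt_succ_of_le hk⟩]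
    exact Nat.card_congr (Equiv.subtypeEquivRight fun π => avoidsBoth_snoc_iff π _)
  · rw [numEndingAt_eq_zero hk]
    exact (Nat.card_eq_zero.2 <| Or.inl ⟨fun π => by have := π.2.2.1; omega⟩).symm

lemma numEndingAt_zero_zero : numEndingAt 0 0 = 1 := by
  rw [numEndingAt_eq_card_acceptsLast, Nat.card_eq_one_iff_unique]
  refine ⟨inferInstance, ⟨⟨1, ?_, acceptsLast_zero _⟩⟩⟩
  simp [AvoidsBoth, avoids1d23_iff, avoids21d3_iff]

lemma numEndingAbove_eq (n k : ℕ) :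
    numEndingAbove n k = numEndingAt n (k + 1) + numEndingAbove n (k + 1) := by
  rw [numEndingAbove, Nat.card_subtype_eq_card_and_add_card_and_not _ fun π => π.entry n = k + 1]
  congr 1 <;> refine Nat.card_congr (Equiv.subtypeEquivRight fun π => ?_) <;>
    simp only [and_assoc] <;>
    exact and_congr_right fun _ => by omega

lemma numEndingAt_succ_zero (n : ℕ) :
    numEndingAt (n + 1) 0 = numEndingAt n 0 + numEndingAbove n 0 := by
  rw [numEndingAt_eq_card_acceptsLast,
    Nat.card_subtype_eq_card_and_add_card_and_not _ fun π => π.entry n = 0]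
  congr 1 <;> refine Nat.card_congr (Equiv.subtypeEquivRight fun π => ?_) <;>
    simp [acceptsLast_zero, Nat.pos_iff_ne_zero]

lemma numEndingAt_succ_one (n : ℕ) : numEndingAt (n + 1) 1 = numEndingAt (n + 1) 0 := by
  simp only [numEndingAt_eq_card_acceptsLast, acceptsLast_one, acceptsLast_zero]

lemma card_acceptsLast_of_entry_ne_zero (n k : ℕ) :
    Nat.card {π : Perm (Fin (n + 1)) // (AvoidsBoth π ∧ AcceptsLast π (k + 1)) ∧ π.entry n ≠ 0} =
      numEndingAbove n k :=
  Nat.card_congr <| Equiv.subtypeEquivRight fun π =>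
    ⟨fun ⟨⟨h, hk⟩, hne⟩ => ⟨h, (acceptsLast_iff_le_entry π h.2 hne).1 hk⟩,
      fun ⟨h, hk⟩ => ⟨⟨h, (acceptsLast_iff_le_entry π h.2 (by omega)).2 hk⟩, by omega⟩⟩

lemma card_acceptsLast_of_entry_eq_zero (n k : ℕ) :
    Nat.card {π : Perm (Fin (n + 2)) // (AvoidsBoth π ∧ AcceptsLast π (k + 2)) ∧
        π.entry (n + 1) = 0} =
      Nat.card {π : Perm (Fin (n + 1)) // (AvoidsBoth π ∧ AcceptsLast π (k + 1)) ∧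
        π.entry n ≠ 0} := by
  have h := card_snoc (fun σ => AvoidsBoth σ ∧ AcceptsLast σ (k + 2)) (0 : Fin (n + 2))
  rw [Fin.val_zero] at h
  rw [← h]
  exact Nat.card_congr <| Equiv.subtypeEquivRight fun π => by
    rw [avoidsBoth_snoc_iff, acceptsLast_snoc_zero_iff]
    simp [acceptsLast_zero, and_assoc]

lemma numEndingAt_add_two (n k : ℕ) :
    numEndingAt (n + 2) (k + 2) = numEndingAbove (n + 1) (k + 1) + numEndingAbove n k := by
  rw [numEndingAt_eq_card_acceptsLast,
    Nat.card_subtype_eq_card_and_add_card_and_not _ fun π => π.entry (n + 1) = 0,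
    card_acceptsLast_of_entry_eq_zero, card_acceptsLast_of_entry_ne_zero,
    card_acceptsLast_of_entry_ne_zero, add_comm]

end Counting

lemma dvd_of_dvd_sub_succ {α : Type*} [Ring α] {a : α} {f : ℕ → α} (N : ℕ)
    (hstep : ∀ k, a ∣ f k - f (k + 1)) (hN : ∀ k, N ≤ k → a ∣ f k) (k : ℕ) : a ∣ f k := by
  induction hd : N - k generalizing k with
  | zero => exact hN k (by omega)
  | succ d ih => simpa using dvd_add (hstep k) (ih (k + 1) (by omega))

section ColumnRecurrence

variable {R : Type*} [CommRing R]

/-- `S k` plays the role of `∑ j > k, C j`; the divisibility `X ^ (k + 1) ∣ S k` is what makes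
the system determine `C`. -/
structure ColumnRecurrence (C S : ℕ → R⟦X⟧) : Prop where
  zero : C 0 = 1 + X * C 0 + X * S 0
  one : C 1 = C 0 - 1
  add_two : ∀ k, C (k + 2) = X * S (k + 1) + X ^ 2 * S k
  tail : ∀ k, S k = C (k + 1) + S (k + 1)
  X_pow_dvd : ∀ k, X ^ (k + 1) ∣ S k

theorem ColumnRecurrence.unique {C S C' S' : ℕ → R⟦X⟧} (h : ColumnRecurrence C S)
    (h' : ColumnRecurrence C' S') : C = C' := by
  set D := fun k => C k - C' k
  set E := fun k => S k - S' k
  have hD0 : D 0 = X * (D 0 + E 0) := by linear_combination h.zero - h'.zero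
  have hD1 : D 1 = D 0 := by linear_combination h.one - h'.one
  have hD2 (k : ℕ) : D (k + 2) = X * (E (k + 1) + X * E k) := by
    linear_combination h.add_two k - h'.add_two k
  have hE (k : ℕ) : E k - E (k + 1) = D (k + 1) := by linear_combination h.tail k - h'.tail k
  have hdvd : ∀ n, (∀ k, X ^ n ∣ D k) ∧ ∀ k, X ^ n ∣ E k := by
    intro n
    induction n with
    | zero => simp
    | succ n ih =>
      have hDn : ∀ k, X ^ (n + 1) ∣ D k := by
        have hX (f : R⟦X⟧) (hf : X ^ n ∣ f) : X ^ (n + 1) ∣ X * f := by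
          rw [pow_succ']; exact mul_dvd_mul_left X hf
        rintro (_ | _ | k)
        · rw [hD0]; exact hX _ (dvd_add (ih.1 0) (ih.2 0))
        · rw [hD1, hD0]; exact hX _ (dvd_add (ih.1 0) (ih.2 0))
        · rw [hD2]; exact hX _ (dvd_add (ih.2 _) (dvd_mul_of_dvd_right (ih.2 k) X))
      refine ⟨hDn, dvd_of_dvd_sub_succ n (fun k => hE k ▸ hDn (k + 1)) fun k hk => ?_⟩
      exact (pow_dvd_pow X (by omega)).trans (dvd_sub (h.X_pow_dvd k) (h'.X_pow_dvd k))
  funext k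
  refine sub_eq_zero.1 (PowerSeries.ext fun n => ?_)
  exact X_pow_dvd_iff.1 ((hdvd (n + 1)).1 k) n n.lt_succ_self

noncomputable def motzkinCol (M : R⟦X⟧) : ℕ → R⟦X⟧
  | 0 => M
  | k + 1 => X ^ (2 * k) * M ^ k * (M - 1)

theorem columnRecurrence_motzkinCol {M : R⟦X⟧} (hM : M = 1 + X * M + X ^ 2 * M ^ 2) :
    ColumnRecurrence (motzkinCol M) fun k => X ^ (2 * k + 1) * M ^ (k + 2) where
  zero := by simp only [motzkinCol]; linear_combination hM
  one := by simp [motzkinCol]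
  add_two k := by simp only [motzkinCol]; linear_combination (X ^ (2 * k + 2) * M ^ (k + 1)) * hM
  tail k := by simp only [motzkinCol]; linear_combination (-X ^ (2 * k) * M ^ k * (1 - X * M)) * hM
  X_pow_dvd k := (pow_dvd_pow X (by omega)).trans (dvd_mul_right _ _)

end ColumnRecurrence

noncomputable def endingAtSeries (k : ℕ) : ℤ⟦X⟧ := mk fun n => (numEndingAt n k : ℤ)

noncomputable def endingAboveSeries (k : ℕ) : ℤ⟦X⟧ := mk fun n => (numEndingAbove n k : ℤ)

theorem columnRecurrence_endingAtSeries : ColumnRecurrence endingAtSeries endingAboveSeries where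
  zero := by
    ext (_ | n)
    · simp [endingAtSeries, numEndingAt_zero_zero]
    · simp [endingAtSeries, endingAboveSeries, numEndingAt_succ_zero]
  one := by
    ext (_ | n)
    · simp [endingAtSeries, numEndingAt_zero_zero, numEndingAt_eq_zero]
    · simp [endingAtSeries, numEndingAt_succ_one]
  add_two k := by
    ext (_ | _ | n)
    · simp [endingAtSeries, numEndingAt_eq_zero]
    · simp [endingAtSeries, endingAboveSeries, numEndingAt_eq_zero, numEndingAbove_eq_zero,
        coeff_X_pow_mul']
    · simp [endingAtSeries, endingAboveSeries, numEndingAt_add_two, coeff_X_pow_mul']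
  tail k := by
    ext n
    simp [endingAtSeries, endingAboveSeries, numEndingAbove_eq n k]
  X_pow_dvd k := X_pow_dvd_iff.2 fun n hn => by
    simp [endingAboveSeries, numEndingAbove_eq_zero (show n ≤ k by omega)]

open PowerSeries in
theorem column_generating_functions_general (M : PowerSeries ℤ)
    (hM : M = 1 + PowerSeries.X * M + PowerSeries.X ^ 2 * M ^ 2) :
    PowerSeries.mk (fun n => (a (n + 1) 1 : ℤ)) = M ∧
    ∀ k : ℕ, 1 ≤ k →
      PowerSeries.mk (fun n => (a (n + 1) (k + 1) : ℤ)) =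
        PowerSeries.X ^ (2 * (k - 1)) * M ^ (k - 1) * (M - 1) := by
  have hcol : endingAtSeries = motzkinCol M :=
    columnRecurrence_endingAtSeries.unique (columnRecurrence_motzkinCol hM)
  have ha (k : ℕ) : mk (fun n => (a (n + 1) (k + 1) : ℤ)) = motzkinCol M k := by
    rw [← hcol]; simp [endingAtSeries, a_succ_succ]
  refine ⟨ha 0, fun k hk => ?_⟩
  obtain ⟨j, rfl⟩ : ∃ j, k = j + 1 := ⟨k - 1, by omega⟩
  simpa [motzkinCol] using ha (j + 1)

open PowerSeries in
theorem column_generating_functions (M : PowerSeries ℤ)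
    (hM0 : PowerSeries.constantCoeff M = 1)
    (hM : M = 1 + PowerSeries.X * M + PowerSeries.X ^ 2 * M ^ 2) :
    PowerSeries.mk (fun n => (a (n + 1) 1 : ℤ)) = M ∧
    ∀ k : ℕ, 1 ≤ k →
      PowerSeries.mk (fun n => (a (n + 1) (k + 1) : ℤ)) =
        PowerSeries.X ^ (2 * (k - 1)) * M ^ (k - 1) * (M - 1) :=
  column_generating_functions_general M hM
end
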